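/- Tagging preserves and reflects query answers: let q(x̄) be a conjunctive query that is a core (as a structure with answer variables fixed), let q_sjf be its self-join-free version obtained by replacing each atom R(ȳ) with R_ȳ(ȳ) using a fresh relation symbol per atom, let D be a database over the schema of q_sjf, and let D_tag be the tagging of D with q, containing for each atom R_ȳ(ȳ) of q_sjf and each fact R_ȳ(c̄) ∈ D the fact R(ȳ ⊗ c̄) where ⊗ is componentwise pairing. Then c̄ ∈ q_sjf(D) if and only if x̄ ⊗ c̄ ∈ q(D_tag). -/

import Mathlib

/-!
A homomorphism `h` from `q` to `D_tag` splits into a tag part `f = fst ∘ h`, an endomorphism of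
`q` fixing the answer variables, and a value part `g = snd ∘ h`, which maps every atom of `q_sjf`,
renamed by `f`, into `D`. Since `q` is a core, `f` permutes the finitely many variables of `q`, so
`f^[n+1]` is the identity on them for some `n`; then `g ∘ f^[n]` is a homomorphism from `q_sjf`
to `D` with the same answer. Conversely, tagging every variable with itself turns a homomorphism
from `q_sjf` to `D` into one from `q` to `D_tag`.
-/

/-- A relational instance over schema `σ` with domain `α`: a set of facts. -/
abbrev Inst (σ α : Type) := Set (σ × List α)

/-- `h` is a homomorphism from instance `D` to instance `E`. -/
def IsHom {σ α β : Type} (D : Inst σ α) (E : Inst σ β) (h : α → β) : Prop :=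
  ∀ R as, (R, as) ∈ D → (R, as.map h) ∈ E

/-- The active domain of an instance. -/
def activeDom {σ α : Type} (D : Inst σ α) : Set α :=
  {a | ∃ R as, (R, as) ∈ D ∧ a ∈ as}

/-- Variables occurring in a set of atoms (atoms use natural numbers as variables). -/
def varsOf {σ : Type} (S : Set (σ × List ℕ)) : Set ℕ :=
  {x | ∃ R as, (R, as) ∈ S ∧ x ∈ as}

/-- A tuple-generating dependency: body and head are sets of relational atoms. -/
structure TGD (σ : Type) where
  body : Set (σ × List ℕ)
  head : Set (σ × List ℕ)

/-- Frontier variables: variables shared by body and head. -/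
def TGD.frontier {σ : Type} (t : TGD σ) : Set ℕ := varsOf t.body ∩ varsOf t.head

/-- `D` satisfies the TGD `t`. -/
def Satisfies {σ α : Type} (D : Inst σ α) (t : TGD σ) : Prop :=
  ∀ h : ℕ → α, IsHom t.body D h →
    ∃ g : ℕ → α, (∀ x ∈ t.frontier, g x = h x) ∧ IsHom t.head D g

/-- A conjunctive query: a set of atoms and a list of answer variables. -/
structure CQ (σ : Type) where
  atoms : Set (σ × List ℕ)
  ansVars : List ℕ

/-- The set of answers to a CQ on an instance. -/
def CQ.Ans {σ α : Type} (q : CQ σ) (D : Inst σ α) : Set (List α) :=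
  {c | ∃ h : ℕ → α, IsHom q.atoms D h ∧ q.ansVars.map h = c}

/-- The tagging of a database `D` over the schema of `q_sjf` with the query
`q`: relation symbols of `q_sjf` are the atoms `(R, ȳ)` of `q`, and each fact
`R_ȳ(c̄) ∈ D` contributes the fact `R(ȳ ⊗ c̄)` with componentwise pairing. -/
def Dtag {σ α : Type} (D : Inst (σ × List ℕ) α) : Inst σ (ℕ × α) :=
  {f | ∃ R ys cs, ((R, ys), cs) ∈ D ∧ f = (R, ys.zip cs)}

namespace List

theorem map_eq_zip_iff {ι β γ : Type*} {l : List ι} {h : ι → β × γ} {xs : List β}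
    {ys : List γ} (hlen : xs.length = ys.length) :
    l.map h = xs.zip ys ↔ l.map (Prod.fst ∘ h) = xs ∧ l.map (Prod.snd ∘ h) = ys := by
  constructor
  · intro H
    rw [← map_map, ← map_map, H, map_fst_zip hlen.le, map_snd_zip hlen.ge]
    exact ⟨rfl, rfl⟩
  · rintro ⟨rfl, rfl⟩
    exact zip_map'.symm

end List

theorem Set.BijOn.exists_iterate_eqOn_id {α : Type*} {f : α → α} {s : Set α} (hs : s.Finite)
    (hf : Set.BijOn f s s) : ∃ n, 0 < n ∧ Set.EqOn f^[n] id s := by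
  have : Finite s := hs.to_subtype
  obtain ⟨n, hn, hper⟩ := isOfFinOrder_of_finite (hf.equiv f)
  refine ⟨n, hn, fun x hx => ?_⟩
  replace hper : hf.equiv f ^ n = 1 := by
    simpa [Function.IsPeriodicPt, Function.IsFixedPt] using hper
  have := congrArg Subtype.val (Equiv.congr_fun hper ⟨x, hx⟩)
  rw [Equiv.Perm.coe_pow, Equiv.Perm.coe_one] at this
  exact (hf.mapsTo.coe_iterate_restrict ⟨x, hx⟩ n).symm.trans this

theorem varsOf_finite {σ : Type} {S : Set (σ × List ℕ)} (hS : S.Finite) : (varsOf S).Finite :=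
  (hS.biUnion fun a _ => a.2.finite_toSet).subset fun _ ⟨_, _, hmem, hx⟩ =>
    Set.mem_biUnion hmem hx

theorem IsHom.comp {σ α β γ : Type} {D : Inst σ α} {E : Inst σ β} {F : Inst σ γ}
    {h : α → β} {k : β → γ} (hh : IsHom D E h) (hk : IsHom E F k) : IsHom D F (k ∘ h) :=
  fun R as hmem => by simpa only [List.map_map] using hk R _ (hh R as hmem)

theorem IsHom.iterate {σ α : Type} {D : Inst σ α} {f : α → α} (hf : IsHom D D f) (n : ℕ) :
    IsHom D D f^[n] := by
  induction n with
  | zero => intro R as hmem; simpa using hmem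
  | succ n ih => rw [Function.iterate_succ]; exact hf.comp ih

/-- Homomorphisms from `q_sjf` to `D`; the atom `R_ȳ(ȳ)` of `q_sjf` is `((R, ȳ), ȳ)`. -/
def IsSjfHom {σ α : Type} (q : CQ σ) (D : Inst (σ × List ℕ) α) (h : ℕ → α) : Prop :=
  ∀ R ys, (R, ys) ∈ q.atoms → ((R, ys), ys.map h) ∈ D

section Tagging

variable {σ α : Type} {q : CQ σ} {D : Inst (σ × List ℕ) α}

theorem IsSjfHom.isHom_Dtag {h : ℕ → α} (hh : IsSjfHom q D h) :
    IsHom q.atoms (Dtag D) (fun x => (x, h x)) := fun R ys hys =>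
  ⟨R, ys, ys.map h, hh R ys hys, by rw [List.map_prod_left_eq_zip]⟩

theorem mem_of_map_mem_Dtag (hlen : ∀ R ys cs, ((R, ys), cs) ∈ D → cs.length = ys.length)
    {h : ℕ → ℕ × α} {R : σ} {ys : List ℕ} (hmem : (R, ys.map h) ∈ Dtag D) :
    ((R, ys.map (Prod.fst ∘ h)), ys.map (Prod.snd ∘ h)) ∈ D := by
  obtain ⟨R', ys', cs, hD, heq⟩ := hmem
  obtain ⟨rfl, hzip⟩ := Prod.mk.inj heq
  obtain ⟨hfst, hsnd⟩ := (List.map_eq_zip_iff (hlen R ys' cs hD).symm).mp hzip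
  rwa [hfst, hsnd]

theorem isSjfHom_comp_iterate {f : ℕ → ℕ} {g : ℕ → α} (hf : IsHom q.atoms q.atoms f)
    (hfg : ∀ R ys, (R, ys) ∈ q.atoms → ((R, ys.map f), ys.map g) ∈ D) {n : ℕ}
    (hn : Set.EqOn f^[n + 1] id (varsOf q.atoms)) : IsSjfHom q D (g ∘ f^[n]) := by
  intro R ys hys
  have hback : (ys.map f^[n]).map f = ys := by
    rw [List.map_map, ← Function.iterate_succ', List.map_congr_left fun x hx =>
      hn ⟨R, ys, hys, hx⟩, List.map_id]
  simpa only [hback, List.map_map] using hfg R _ (hf.iterate n R ys hys)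

theorem exists_isSjfHom_of_isHom_Dtag
    (hwf : ∀ R ys cs, ((R, ys), cs) ∈ D → (R, ys) ∈ q.atoms ∧ cs.length = ys.length)
    (hfin : q.atoms.Finite)
    (hcore : ∀ f : ℕ → ℕ, IsHom q.atoms q.atoms f → (∀ x ∈ q.ansVars, f x = x) →
      Set.BijOn f (varsOf q.atoms) (varsOf q.atoms))
    {c : List α} (hc : c.length = q.ansVars.length) {h : ℕ → ℕ × α}
    (hh : IsHom q.atoms (Dtag D) h) (hans : q.ansVars.map h = q.ansVars.zip c) :
    ∃ h' : ℕ → α, IsSjfHom q D h' ∧ q.ansVars.map h' = c := by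
  set f := Prod.fst ∘ h
  set g := Prod.snd ∘ h
  have hfg : ∀ R ys, (R, ys) ∈ q.atoms → ((R, ys.map f), ys.map g) ∈ D := fun R ys hys =>
    mem_of_map_mem_Dtag (fun R ys cs hD => (hwf R ys cs hD).2) (hh R ys hys)
  have hf : IsHom q.atoms q.atoms f := fun R ys hys => (hwf _ _ _ (hfg R ys hys)).1
  obtain ⟨hf_ans, hg_ans⟩ := (List.map_eq_zip_iff hc.symm).mp hans
  have hfix : ∀ x ∈ q.ansVars, f x = x :=
    List.map_eq_map_iff.mp (hf_ans.trans (List.map_id _).symm)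
  obtain ⟨n, hn, hper⟩ := (hcore f hf hfix).exists_iterate_eqOn_id (varsOf_finite hfin)
  obtain ⟨n, rfl⟩ := Nat.exists_eq_add_one_of_ne_zero hn.ne'
  refine ⟨g ∘ f^[n], isSjfHom_comp_iterate hf hfg hper, ?_⟩
  rw [← hg_ans]
  exact List.map_congr_left fun x hx => congrArg g (Function.iterate_fixed (hfix x hx) n)

end Tagging

theorem stmt9_general {σ α : Type} (q : CQ σ) (D : Inst (σ × List ℕ) α)
    (hwf : ∀ R ys cs, ((R, ys), cs) ∈ D → (R, ys) ∈ q.atoms ∧ cs.length = ys.length)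
    (hfin : q.atoms.Finite)
    (hcore : ∀ f : ℕ → ℕ, IsHom q.atoms q.atoms f → (∀ x ∈ q.ansVars, f x = x) →
      Set.BijOn f (varsOf q.atoms) (varsOf q.atoms)) :
    ∀ c : List α, c.length = q.ansVars.length →
      ((∃ h : ℕ → α, (∀ R ys, (R, ys) ∈ q.atoms → ((R, ys), ys.map h) ∈ D) ∧
          q.ansVars.map h = c) ↔
        (∃ h : ℕ → ℕ × α, IsHom q.atoms (Dtag D) h ∧
          q.ansVars.map h = q.ansVars.zip c)) := by
  intro c hc
  constructor
  · rintro ⟨h, hh, rfl⟩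
    exact ⟨_, IsSjfHom.isHom_Dtag hh, List.map_prod_left_eq_zip⟩
  · rintro ⟨h, hh, hans⟩
    exact exists_isSjfHom_of_isHom_Dtag hwf hfin hcore hc hh hans

/-- Tagging preserves and reflects query answers (Lemma 5 of Carmeli et al.):
for a CQ `q` that is a core, `c̄ ∈ q_sjf(D)` iff `x̄ ⊗ c̄ ∈ q(D_tag)`. -/
theorem stmt9 {σ α : Type} (q : CQ σ) (D : Inst (σ × List ℕ) α)
    (hwf : ∀ R ys cs, ((R, ys), cs) ∈ D → (R, ys) ∈ q.atoms ∧ cs.length = ys.length)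
    (hans : ∀ x ∈ q.ansVars, x ∈ varsOf q.atoms)
    (hfin : q.atoms.Finite)
    (hcore : ∀ f : ℕ → ℕ, IsHom q.atoms q.atoms f → (∀ x ∈ q.ansVars, f x = x) →
      Set.BijOn f (varsOf q.atoms) (varsOf q.atoms)) :
    ∀ c : List α, c.length = q.ansVars.length →
      ((∃ h : ℕ → α, (∀ R ys, (R, ys) ∈ q.atoms → ((R, ys), ys.map h) ∈ D) ∧
          q.ansVars.map h = c) ↔
        (∃ h : ℕ → ℕ × α, IsHom q.atoms (Dtag D) h ∧
          q.ansVars.map h = q.ansVars.zip c)) :=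
  stmt9_general q D hwf hfin hcore
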